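/- Let t and t' be finite directed trees, each with at least two vertices, with designated roots ρ and ρ' of degree one, and in which no vertex has indegree and outdegree both equal to one. Let T be the multidigraph obtained from their disjoint union by identifying ρ with ρ'. Let π be a solid partition of the vertex set of T such that the quotient T^π is an oriented cactus. Then π induces a pair partition of the two vertex sets: every vertex of t lies in the same block of π as exactly one vertex of t' and vice versa (with the convention that ρ corresponds to ρ'), so π induces a bijection f_π from the vertices of t to the vertices of t'. -/

import Mathlib

set_option autoImplicit false

/-! ## Multigraphs -/

/-- A multigraph: a vertex type `V`, an edge type `E`, and an assignment to each edge of
its unordered pair of endpoints.  Loops and parallel edges are allowed. -/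
structure Multigraph (V E : Type) where
  ends : E → Sym2 V

namespace Multigraph

variable {V E : Type}

/-- `G.ReachAvoid F u v` : `v` can be reached from `u` by a walk using no edge of `F`. -/
inductive ReachAvoid (G : Multigraph V E) (F : Set E) : V → V → Prop
  | refl (v : V) : ReachAvoid G F v v
  | tail {u v w : V} (e : E) (he : e ∉ F) (hvw : G.ends e = s(v, w))
      (h : ReachAvoid G F u v) : ReachAvoid G F u w

/-- A multigraph is connected if any two vertices are joined by a walk. -/
def Connected (G : Multigraph V E) : Prop := ∀ u v : V, G.ReachAvoid ∅ u v

/-- `F` is a set of edges whose deletion disconnects `v` from `w`. -/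
def IsEdgeCut (G : Multigraph V E) (v w : V) (F : Set E) : Prop := ¬ G.ReachAvoid F v w

/-- Edge connectivity `λ(v, w)`: the minimum number of edges whose deletion
disconnects `v` from `w`. -/
noncomputable def edgeConn (G : Multigraph V E) (v w : V) : ℕ :=
  sInf {k : ℕ | ∃ F : Finset E, F.card = k ∧ G.IsEdgeCut v w ↑F}

/-- Walks in a multigraph, recorded together with the edges they traverse. -/
inductive Walk (G : Multigraph V E) : V → V → Type
  | nil (v : V) : Walk G v v
  | cons {u v w : V} (e : E) (huv : G.ends e = s(u, v)) (p : Walk G v w) : Walk G u w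

namespace Walk

variable {G : Multigraph V E}

/-- The list of edges traversed by a walk. -/
def edges : ∀ {u v : V}, G.Walk u v → List E
  | _, _, .nil _ => []
  | _, _, .cons e _ p => e :: edges p

/-- The list of vertices visited by a walk (including both endpoints). -/
def verts : ∀ {u v : V}, G.Walk u v → List V
  | _, v, .nil _ => [v]
  | u, _, .cons _ _ p => u :: verts p

/-- A walk is a path if it visits no vertex twice. -/
def IsPath {u v : V} (p : G.Walk u v) : Prop := p.verts.Nodup

end Walk

/-- `S` is the edge set of a simple cycle of `G`: a nonempty closed walk with no repeated
edges and no repeated vertices (other than the final return to the starting point).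
A loop is a simple cycle of length one. -/
def IsSimpleCycleOn [DecidableEq E] (G : Multigraph V E) (S : Finset E) : Prop :=
  ∃ (v : V) (p : G.Walk v v),
    p.edges ≠ [] ∧ p.edges.Nodup ∧ p.verts.dropLast.Nodup ∧ p.edges.toFinset = S

/-- A cactus: a connected multigraph in which every edge lies on exactly one simple cycle
(simple cycles being identified with their edge sets). -/
def IsCactus [DecidableEq E] (G : Multigraph V E) : Prop :=
  G.Connected ∧ ∀ e : E, ∃! S : Finset E, G.IsSimpleCycleOn S ∧ e ∈ S

/-- Two-edge-connected: connected, and still connected after deleting any single edge. -/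
def TwoEdgeConnected (G : Multigraph V E) : Prop :=
  G.Connected ∧ ∀ (e : E) (u v : V), G.ReachAvoid {e} u v

/-- The quotient multigraph by a partition (setoid) of the vertices: the vertices are the
blocks, and each edge joins the blocks of its original endpoints. -/
def quot (G : Multigraph V E) (σ : Setoid V) : Multigraph (Quotient σ) E :=
  ⟨fun e => (G.ends e).map (Quotient.mk σ)⟩

/-- Degree of a vertex: the number of edge-incidences at it (loops count twice). -/
def degree [DecidableEq V] [Fintype E] (G : Multigraph V E) (v : V) : ℕ :=
  ∑ e : E,
    Sym2.lift
      ⟨fun a b => (if a = v then 1 else 0) + (if b = v then 1 else 0),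
        fun _ _ => add_comm _ _⟩ (G.ends e)

/-- A leaf is a vertex of degree one. -/
def IsLeaf [DecidableEq V] [Fintype E] (G : Multigraph V E) (v : V) : Prop :=
  G.degree v = 1

/-- A tree: a connected multigraph with no simple cycles. -/
def IsTree [DecidableEq E] (G : Multigraph V E) : Prop :=
  G.Connected ∧ ∀ S : Finset E, ¬ G.IsSimpleCycleOn S

end Multigraph

/-- An embedding of the multigraph `H` into `G`, realizing `H` as a subgraph of `G`. -/
structure Multigraph.Embedding {W F V E : Type} (H : Multigraph W F) (G : Multigraph V E) where
  vmap : W → V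
  emap : F → E
  vmap_inj : Function.Injective vmap
  emap_inj : Function.Injective emap
  ends_map : ∀ f : F, G.ends (emap f) = (H.ends f).map vmap

/-! ## Multidigraphs -/

/-- A multidigraph: vertex type `V`, edge type `E`, and source and target maps. -/
structure Multidigraph (V E : Type) where
  src : E → V
  tgt : E → V

namespace Multidigraph

variable {V E : Type}

/-- The underlying multigraph of a multidigraph. -/
def toMultigraph (D : Multidigraph V E) : Multigraph V E :=
  ⟨fun e => s(D.src e, D.tgt e)⟩

/-- Directed walks in a multidigraph. -/
inductive DiWalk (D : Multidigraph V E) : V → V → Type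
  | nil (v : V) : DiWalk D v v
  | cons {u v w : V} (e : E) (hs : D.src e = u) (ht : D.tgt e = v)
      (p : DiWalk D v w) : DiWalk D u w

namespace DiWalk

variable {D : Multidigraph V E}

/-- The list of edges traversed by a directed walk. -/
def edges : ∀ {u v : V}, D.DiWalk u v → List E
  | _, _, .nil _ => []
  | _, _, .cons e _ _ p => e :: edges p

/-- The list of vertices visited by a directed walk. -/
def verts : ∀ {u v : V}, D.DiWalk u v → List V
  | _, v, .nil _ => [v]
  | u, _, .cons _ _ _ p => u :: verts p

end DiWalk

/-- `S` is the edge set of a simple directed cycle of `D`. -/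
def IsDiCycleOn [DecidableEq E] (D : Multidigraph V E) (S : Finset E) : Prop :=
  ∃ (v : V) (p : D.DiWalk v v),
    p.edges ≠ [] ∧ p.edges.Nodup ∧ p.verts.dropLast.Nodup ∧ p.edges.toFinset = S

/-- An oriented cactus: the underlying multigraph is a cactus and each of its simple
cycles (pads) is a directed cycle. -/
def IsOrientedCactus [DecidableEq E] (D : Multidigraph V E) : Prop :=
  D.toMultigraph.IsCactus ∧
    ∀ S : Finset E, D.toMultigraph.IsSimpleCycleOn S → D.IsDiCycleOn S

/-- The quotient multidigraph by a partition (setoid) of the vertices. -/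
def quot (D : Multidigraph V E) (σ : Setoid V) : Multidigraph (Quotient σ) E where
  src := fun e => Quotient.mk σ (D.src e)
  tgt := fun e => Quotient.mk σ (D.tgt e)

/-- Indegree of a vertex: the number of edges with target `v`. -/
def indeg [DecidableEq V] [Fintype E] (D : Multidigraph V E) (v : V) : ℕ :=
  (Finset.univ.filter fun e => D.tgt e = v).card

/-- Outdegree of a vertex: the number of edges with source `v`. -/
def outdeg [DecidableEq V] [Fintype E] (D : Multidigraph V E) (v : V) : ℕ :=
  (Finset.univ.filter fun e => D.src e = v).card

end Multidigraph

/-- An embedding of the multidigraph `H` into `G`, realizing `H` as a subgraph of `G`. -/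
structure Multidigraph.Embedding {W F V E : Type}
    (H : Multidigraph W F) (G : Multidigraph V E) where
  vmap : W → V
  emap : F → E
  vmap_inj : Function.Injective vmap
  emap_inj : Function.Injective emap
  src_map : ∀ f : F, G.src (emap f) = vmap (H.src f)
  tgt_map : ∀ f : F, G.tgt (emap f) = vmap (H.tgt f)

/-! ## Cycle graphs and non-crossing partitions -/

/-- The cycle graph of length `n`: vertices `Fin n`, edges `Fin n`, edge `i` joining
`v i` and `v (i+1)` (indices mod `n`). -/
def cycleGraph (n : ℕ) [NeZero n] : Multigraph (Fin n) (Fin n) :=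
  ⟨fun i => s(i, i + 1)⟩

/-- The cycle graph of length `n` in which each edge carries an orientation:
edge `i` is oriented counterclockwise (from `v i` to `v (i+1)`) if `orient i = true`,
and clockwise otherwise. -/
def cycleDigraph (n : ℕ) [NeZero n] (orient : Fin n → Bool) : Multidigraph (Fin n) (Fin n) where
  src := fun i => if orient i then i else i + 1
  tgt := fun i => if orient i then i + 1 else i

/-- A relation (e.g. a partition) on `Fin m` is non-crossing if there are no indices
`i₁ < i₂ < i₃ < i₄` with `i₁, i₃` in one block and `i₂, i₄` in a different block. -/
def NonCrossingRel {m : ℕ} (r : Fin m → Fin m → Prop) : Prop :=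
  ¬ ∃ i₁ i₂ i₃ i₄ : Fin m, i₁ < i₂ ∧ i₂ < i₃ ∧ i₃ < i₄ ∧ r i₁ i₃ ∧ r i₂ i₄ ∧ ¬ r i₁ i₂

/-- The union of a partition `σ` of the vertices `v₁, …, vₙ` (at the even positions) and
a partition `κ` of the edges `e₁, …, eₙ` (at the odd positions) of a cycle, as a relation
on the `2n` interlaced points `v₁, e₁, v₂, e₂, …, vₙ, eₙ`. -/
def interRel {n : ℕ} (σ κ : Setoid (Fin n)) (x y : Fin (2 * n)) : Prop :=
  (x.val % 2 = 0 ∧ y.val % 2 = 0 ∧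
    σ.r ⟨x.val / 2, by have := x.isLt; omega⟩ ⟨y.val / 2, by have := y.isLt; omega⟩) ∨
  (x.val % 2 = 1 ∧ y.val % 2 = 1 ∧
    κ.r ⟨x.val / 2, by have := x.isLt; omega⟩ ⟨y.val / 2, by have := y.isLt; omega⟩)

/-- `κ` is the Kreweras complement of `σ`: the largest partition of the edges such that
the union `σ ∪ κ` is non-crossing with respect to the interlaced (cyclic) order. -/
def IsKrewerasComplement {n : ℕ} (σ κ : Setoid (Fin n)) : Prop :=
  NonCrossingRel (interRel σ κ) ∧
    ∀ κ' : Setoid (Fin n), NonCrossingRel (interRel σ κ') → κ' ≤ κ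

open Classical in
/-- The block of the partition `κ` containing `i`, as a finite set. -/
noncomputable def setoidClass {n : ℕ} (κ : Setoid (Fin n)) (i : Fin n) : Finset (Fin n) :=
  Finset.univ.filter fun j => κ.r i j

open Fin.NatCast in
/-- `j` is the next element of `B` encountered strictly after `i` in the cyclic order of
`Fin n` (if `B = {i}` then `j = i` itself, one full turn later). -/
def CyclicNextIn {n : ℕ} [NeZero n] (B : Finset (Fin n)) (i j : Fin n) : Prop :=
  i ∈ B ∧ j ∈ B ∧ ∃ d : ℕ, 0 < d ∧ d ≤ n ∧ j = i + (d : Fin n) ∧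
    ∀ d' : ℕ, 0 < d' → d' < d → i + (d' : Fin n) ∉ B

/-! ## Wedges of two (di)graphs at their roots -/

/-- The canonical map from the vertices of `t'` into the wedge vertex type
`V ⊕ {x : V' // x ≠ ρ'}`, sending the root `ρ'` to (the image of) `ρ`. -/
def wedgeJ {V V' : Type} [DecidableEq V'] (ρ : V) (ρ' : V') :
    V' → V ⊕ {x : V' // x ≠ ρ'} :=
  fun x => if h : x = ρ' then Sum.inl ρ else Sum.inr ⟨x, h⟩

/-- The wedge of two multigraphs `t`, `t'` obtained by identifying `ρ ∈ t` with `ρ' ∈ t'`. -/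
def Multigraph.wedge {V E V' E' : Type} [DecidableEq V']
    (t : Multigraph V E) (t' : Multigraph V' E') (ρ : V) (ρ' : V') :
    Multigraph (V ⊕ {x : V' // x ≠ ρ'}) (E ⊕ E') :=
  ⟨fun e =>
    match e with
    | Sum.inl e => (t.ends e).map Sum.inl
    | Sum.inr e => (t'.ends e).map (wedgeJ ρ ρ')⟩

/-- The wedge of two multidigraphs `t`, `t'` obtained by identifying `ρ ∈ t` with `ρ' ∈ t'`. -/
def Multidigraph.wedge {V E V' E' : Type} [DecidableEq V']
    (t : Multidigraph V E) (t' : Multidigraph V' E') (ρ : V) (ρ' : V') :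
    Multidigraph (V ⊕ {x : V' // x ≠ ρ'}) (E ⊕ E') where
  src := fun e =>
    match e with
    | Sum.inl e => Sum.inl (t.src e)
    | Sum.inr e => wedgeJ ρ ρ' (t'.src e)
  tgt := fun e =>
    match e with
    | Sum.inl e => Sum.inl (t.tgt e)
    | Sum.inr e => wedgeJ ρ ρ' (t'.tgt e)

/-! ## Flowers (a cycle with graphs attached) and stars (trees wedged at a common root) -/

/-- The canonical map from the vertices of the `i`-th attached graph into the flower,
sending the basepoint `b i` to the cycle vertex `i`. -/
def flowerJ {n : ℕ} {W : Fin n → Type} [∀ i, DecidableEq (W i)]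
    (b : ∀ i, W i) (i : Fin n) :
    W i → Fin n ⊕ (Σ i, {x : W i // x ≠ b i}) :=
  fun x => if h : x = b i then Sum.inl i else Sum.inr ⟨i, x, h⟩

/-- The flower: a cycle of length `n` with the multigraph `d i` attached at the cycle
vertex `i` via its basepoint `b i`; the attached graphs are disjoint except through the
cycle, and `d i` meets the cycle exactly in the vertex `i`. -/
def flowerGraph {n : ℕ} [NeZero n] {W F : Fin n → Type} [∀ i, DecidableEq (W i)]
    (d : ∀ i, Multigraph (W i) (F i)) (b : ∀ i, W i) :
    Multigraph (Fin n ⊕ (Σ i, {x : W i // x ≠ b i})) (Fin n ⊕ (Σ i, F i)) :=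
  ⟨fun e =>
    match e with
    | Sum.inl k => s(Sum.inl k, Sum.inl (k + 1))
    | Sum.inr ⟨i, f⟩ => ((d i).ends f).map (flowerJ b i)⟩

/-- The canonical map from the vertices of the `i`-th tree into the star, sending the
root `r i` to the common amalgamated root. -/
def starJ {n : ℕ} {W : Fin n → Type} [∀ i, DecidableEq (W i)]
    (r : ∀ i, W i) (i : Fin n) :
    W i → Unit ⊕ (Σ i, {x : W i // x ≠ r i}) :=
  fun x => if h : x = r i then Sum.inl () else Sum.inr ⟨i, x, h⟩

/-- The star: the disjoint union of the multigraphs `t i` with all the roots `r i`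
identified to a single vertex. -/
def starGraph {n : ℕ} {W F : Fin n → Type} [∀ i, DecidableEq (W i)]
    (t : ∀ i, Multigraph (W i) (F i)) (r : ∀ i, W i) :
    Multigraph (Unit ⊕ (Σ i, {x : W i // x ≠ r i})) (Σ i, F i) :=
  ⟨fun e => ((t e.1).ends e.2).map (starJ r e.1)⟩

/-! ## Graphs of matrices -/

/-- The partition of `V` identifying the input `vin` with the output `vout` (and nothing
else). -/
def rootSetoid {V : Type} (vin vout : V) : Setoid V where
  r a b := a = b ∨ ((a = vin ∨ a = vout) ∧ (b = vin ∨ b = vout))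
  iseqv := by
    constructor
    · intro x; exact Or.inl rfl
    · rintro x y (rfl | ⟨hx, hy⟩)
      · exact Or.inl rfl
      · exact Or.inr ⟨hy, hx⟩
    · rintro x y z (rfl | ⟨hx, hy⟩) (rfl | ⟨hy', hz⟩)
      · exact Or.inl rfl
      · exact Or.inr ⟨hy', hz⟩
      · exact Or.inr ⟨hx, hy⟩
      · exact Or.inr ⟨hx, hz⟩

/-- The graph of matrices `Z_g(A₁, …, A_K)` associated to a bi-rooted multidigraph `g`
with input `vin`, output `vout` and edge ordering `o`. -/
noncomputable def graphOfMatrices {V E : Type} [Fintype V] [Fintype E] [DecidableEq V] {K N : ℕ}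
    (g : Multidigraph V E) (vin vout : V) (o : E ≃ Fin K)
    (A : Fin K → Matrix (Fin N) (Fin N) ℂ) : Matrix (Fin N) (Fin N) ℂ :=
  Matrix.of fun i j =>
    ∑ φ : V → Fin N,
      if φ vout = i ∧ φ vin = j then ∏ e : E, A (o e) (φ (g.tgt e)) (φ (g.src e)) else 0

/-! ## Set partitions as finite set systems -/

/-- `P` is a partition of the (finite) type `V`: its blocks are nonempty and every
element of `V` lies in exactly one block. -/
def IsPartitionOf (V : Type) [DecidableEq V] (P : Finset (Finset V)) : Prop :=
  (∀ B ∈ P, B.Nonempty) ∧ ∀ v : V, ∃! B, B ∈ P ∧ v ∈ B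

/-- The block of the partition `P` containing `v`. -/
def blockOf {V : Type} [DecidableEq V] (P : Finset (Finset V)) (hP : IsPartitionOf V P)
    (v : V) : {B : Finset V // B ∈ P} :=
  ⟨Finset.choose (fun B => v ∈ B) P (hP.2 v),
    Finset.choose_mem (fun B => v ∈ B) P (hP.2 v)⟩

/-!
Let `D = T^π` and let `U` be the set of vertices of `t` whose block contains no vertex of `t'`.
Every edge of `D` at a vertex of `U` comes from `t`, and every edge of `D` lies on a directed
cycle, so each vertex of `U` (which has an edge, `t` being connected with two vertices) has
positive in- and outdegree in `t`, hence total degree at least `3`. Since trees have no cycles,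
every pad of `D` uses edges of both trees, so it contains an edge of `t` entering a block shared
with `t'` and one leaving such a block; hence `2 · #pads ≤ 2 |E| - 3 |U|`. On the other hand,
counting the edges outside a spanning tree, `|E(D)| + 1 ≤ |V(D)| + #pads`, where
`|E(D)| = |E| + |E'|`, `|V(D)| = |V'| + |U|` and `|V'| ≤ |E'| + 1`; so `|E| ≤ |U| + #pads`, which
forces `U = ∅`. Exchanging the roles of `t` and `t'` gives the bijection.
-/

open Finset

namespace Multigraph

variable {V E : Type} {G : Multigraph V E}

theorem ReachAvoid.mono {F F' : Set E} (hF : F' ⊆ F) {u v : V}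
    (h : G.ReachAvoid F u v) : G.ReachAvoid F' u v := by
  induction h with
  | refl => exact .refl _
  | tail e he hvw _ ih => exact .tail e (fun h => he (hF h)) hvw ih

theorem ReachAvoid.trans {F : Set E} {u v w : V} (h : G.ReachAvoid F u v)
    (h' : G.ReachAvoid F v w) : G.ReachAvoid F u w := by
  induction h' with
  | refl => exact h
  | tail e he hvw _ ih => exact .tail e he hvw ih

theorem ReachAvoid.symm {F : Set E} {u v : V} (h : G.ReachAvoid F u v) :
    G.ReachAvoid F v u := by
  induction h with
  | refl => exact .refl _
  | tail e he hvw _ ih =>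
    exact (ReachAvoid.tail e he (by rw [hvw, Sym2.eq_swap]) (.refl _)).trans ih

theorem ReachAvoid.exists_boundary_edge {F : Set E} {u v : V} (h : G.ReachAvoid F u v)
    {R : Set V} (hu : u ∈ R) (hv : v ∉ R) :
    ∃ e ∉ F, ∃ x ∈ R, ∃ y ∉ R, G.ends e = s(x, y) := by
  induction h with
  | refl => exact absurd hu hv
  | @tail x y e he hxy _ ih =>
    by_cases hx : x ∈ R
    · exact ⟨e, he, x, hx, y, hv, hxy⟩
    · exact ih hx

theorem Connected.exists_mem_ends [Fintype V] (hG : G.Connected) (hV : 1 < Fintype.card V)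
    (u : V) : ∃ e, u ∈ G.ends e := by
  obtain ⟨w, hw⟩ := Fintype.exists_ne_of_one_lt_card hV u
  cases hG w u with
  | refl => exact absurd rfl hw
  | tail e _ hvw _ => exact ⟨e, by simp [hvw]⟩

namespace Walk

theorem verts_ne_nil {u v : V} : ∀ p : G.Walk u v, p.verts ≠ []
  | .nil _ => List.cons_ne_nil _ _
  | .cons _ _ _ => List.cons_ne_nil _ _

theorem getLast_verts {u v : V} (p : G.Walk u v) : p.verts.getLast p.verts_ne_nil = v := by
  induction p with
  | nil => rfl
  | cons _ _ p ih => exact (List.getLast_cons p.verts_ne_nil).trans ih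

theorem mem_verts_of_mem_ends {u v : V} (p : G.Walk u v) {f : E} (hf : f ∈ p.edges) {x : V}
    (hx : x ∈ G.ends f) : x ∈ p.verts := by
  induction p with
  | nil => simp [edges] at hf
  | cons e h p ih =>
    simp only [edges, List.mem_cons] at hf
    rcases hf with rfl | hf
    · rw [h, Sym2.mem_iff] at hx
      rcases hx with rfl | rfl
      · exact List.mem_cons_self
      · cases p <;> simp [verts]
    · exact List.mem_cons_of_mem _ (ih hf)

theorem IsPath.edges_nodup {u v : V} {p : G.Walk u v} (hp : p.IsPath) : p.edges.Nodup := by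
  induction p with
  | nil => simp [edges]
  | cons e h p ih =>
    rw [IsPath, verts, List.nodup_cons] at hp
    exact List.nodup_cons.2
      ⟨fun he => hp.1 (p.mem_verts_of_mem_ends he (by simp [h])), ih hp.2⟩

theorem exists_suffix {u v x : V} (p : G.Walk u v) (hx : x ∈ p.verts) :
    ∃ q : G.Walk x v, q.verts.Sublist p.verts ∧ q.edges ⊆ p.edges := by
  induction p with
  | nil =>
    obtain rfl := List.mem_singleton.1 hx
    exact ⟨.nil _, .refl _, fun _ h => h⟩
  | cons e h p ih =>
    rcases List.mem_cons.1 hx with rfl | hx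
    · exact ⟨.cons e h p, .refl _, fun _ h => h⟩
    · obtain ⟨q, hqv, hqe⟩ := ih hx
      exact ⟨q, hqv.cons _, fun f hf => List.mem_cons_of_mem _ (hqe hf)⟩

theorem exists_isPath {u v : V} (p : G.Walk u v) :
    ∃ q : G.Walk u v, q.IsPath ∧ q.edges ⊆ p.edges := by
  induction p with
  | nil w => exact ⟨.nil w, List.nodup_singleton w, fun _ h => h⟩
  | @cons a _ _ e h p ih =>
    obtain ⟨q, hq, hqp⟩ := ih
    by_cases ha : a ∈ q.verts
    · obtain ⟨r, hrv, hre⟩ := q.exists_suffix ha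
      exact ⟨r, hq.sublist hrv, fun f hf => List.mem_cons_of_mem _ (hqp (hre hf))⟩
    · exact ⟨.cons e h q, List.nodup_cons.2 ⟨ha, hq⟩, List.cons_subset_cons _ hqp⟩

end Walk

theorem ReachAvoid.exists_walk {F : Set E} {u v : V} (h : G.ReachAvoid F u v) :
    ∃ p : G.Walk v u, ∀ f ∈ p.edges, f ∉ F := by
  induction h with
  | refl => exact ⟨.nil _, by simp [Walk.edges]⟩
  | tail e he hvw _ ih =>
    obtain ⟨p, hp⟩ := ih
    refine ⟨.cons e (by rw [hvw, Sym2.eq_swap]) p, fun f hf => ?_⟩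
    rcases List.mem_cons.1 hf with rfl | hf
    exacts [he, hp f hf]

theorem Connected.exists_tree_of_card [Fintype V] (hG : G.Connected) (v₀ : V) :
    ∀ n, n + 1 ≤ Fintype.card V → ∃ (R : Finset V) (T : Finset E), v₀ ∈ R ∧ R.card = n + 1 ∧
      T.card = n ∧ (∀ e ∈ T, ∀ x ∈ G.ends e, x ∈ R) ∧ ∀ u ∈ R, G.ReachAvoid (↑T)ᶜ v₀ u := by
  classical
  intro n
  induction n with
  | zero =>
    intro _
    refine ⟨{v₀}, ∅, mem_singleton_self _, rfl, rfl, by simp, fun u hu => ?_⟩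
    rw [mem_singleton.1 hu]
    exact .refl _
  | succ n ih =>
    intro hn
    obtain ⟨R, T, hv₀, hR, hT, hTR, hreach⟩ := ih (by omega)
    obtain ⟨w, -, hw⟩ := exists_mem_notMem_of_card_lt_card (s := R) (t := univ)
      (by rw [card_univ]; omega)
    obtain ⟨e, -, x, hx, y, hy, hxy⟩ := (hG v₀ w).exists_boundary_edge (R := ↑R) hv₀ hw
    have he : e ∉ T := fun he => hy (hTR e he y (by simp [hxy]))
    have hmono : (↑(insert e T) : Set E)ᶜ ⊆ (↑T)ᶜ :=
      Set.compl_subset_compl.2 (by simp [Set.subset_insert])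
    refine ⟨insert y R, insert e T, mem_insert_of_mem hv₀,
      by rw [card_insert_of_notMem hy, hR], by rw [card_insert_of_notMem he, hT],
      fun f hf z hz => ?_, fun u hu => ?_⟩
    · rcases mem_insert.1 hf with rfl | hf
      · rw [hxy, Sym2.mem_iff] at hz
        rcases hz with rfl | rfl
        exacts [mem_insert_of_mem hx, mem_insert_self _ _]
      · exact mem_insert_of_mem (hTR f hf z hz)
    · rcases mem_insert.1 hu with rfl | hu
      · exact .tail e (by simp) hxy ((hreach x hx).mono hmono)
      · exact (hreach u hu).mono hmono

theorem Connected.exists_spanning_tree [Fintype V] [Nonempty V] (hG : G.Connected) :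
    ∃ T : Finset E, T.card + 1 = Fintype.card V ∧ ∀ u v, G.ReachAvoid (↑T)ᶜ u v := by
  obtain ⟨v₀⟩ := ‹Nonempty V›
  have hpos := Fintype.card_pos (α := V)
  obtain ⟨R, T, -, hR, hT, -, hreach⟩ := hG.exists_tree_of_card v₀ (Fintype.card V - 1) (by omega)
  obtain rfl : R = univ := eq_univ_of_card R (by omega)
  exact ⟨T, by omega, fun u v => (hreach u (mem_univ u)).symm.trans (hreach v (mem_univ v))⟩

theorem Connected.card_le_card_add_one [Fintype V] [Fintype E] (hG : G.Connected) :
    Fintype.card V ≤ Fintype.card E + 1 := by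
  cases isEmpty_or_nonempty V
  · simp
  · obtain ⟨T, hT, -⟩ := hG.exists_spanning_tree
    have := T.card_le_univ
    omega

theorem exists_isSimpleCycleOn_subset_insert [DecidableEq E] {T : Finset E} {e : E} {a b : V}
    (hab : G.ends e = s(a, b)) (he : e ∉ T) (h : G.ReachAvoid (↑T)ᶜ a b) :
    ∃ S, G.IsSimpleCycleOn S ∧ e ∈ S ∧ S ⊆ insert e T := by
  obtain ⟨p, hpT⟩ := h.exists_walk
  obtain ⟨q, hq, hqp⟩ := p.exists_isPath
  have hqT : ∀ f ∈ q.edges, f ∈ T := fun f hf => by simpa using hpT f (hqp hf)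
  refine ⟨(Walk.cons e hab q).edges.toFinset, ⟨a, .cons e hab q, List.cons_ne_nil _ _, ?_, ?_, rfl⟩,
    by simp [Walk.edges], fun f hf => ?_⟩
  · exact List.nodup_cons.2 ⟨fun h => he (hqT e h), hq.edges_nodup⟩
  · rw [Walk.verts, List.dropLast_cons_of_ne_nil q.verts_ne_nil, List.nodup_cons]
    refine ⟨fun ha => ?_, hq.sublist (List.dropLast_sublist _)⟩
    have hnd : (q.verts.dropLast ++ [q.verts.getLast q.verts_ne_nil]).Nodup := by
      rwa [List.dropLast_append_getLast]
    rw [Walk.getLast_verts, List.nodup_append] at hnd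
    exact hnd.2.2 a ha a (List.mem_singleton_self a) rfl
  · simp only [Walk.edges, List.mem_toFinset, List.mem_cons] at hf
    rcases hf with rfl | hf
    exacts [mem_insert_self _ _, mem_insert_of_mem (hqT f hf)]

theorem card_add_one_le_card_add_ncard [Fintype V] [Fintype E] [DecidableEq E] [Nonempty V]
    (hG : G.Connected) (hcyc : ∀ e, {S | G.IsSimpleCycleOn S ∧ e ∈ S}.Subsingleton) :
    Fintype.card E + 1 ≤ Fintype.card V + {S : Finset E | G.IsSimpleCycleOn S}.ncard := by
  classical
  obtain ⟨T, hT, hreach⟩ := hG.exists_spanning_tree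
  have hfund : ∀ e ∉ T, ∃ S, G.IsSimpleCycleOn S ∧ e ∈ S ∧ S ⊆ insert e T := by
    intro e he
    obtain ⟨⟨a, b⟩, hab⟩ := Quot.exists_rep (G.ends e)
    exact exists_isSimpleCycleOn_subset_insert hab.symm he (hreach a b)
  have hcard : Tᶜ.card ≤ {S : Finset E | G.IsSimpleCycleOn S}.toFinset.card := by
    refine card_le_card_of_forall_subsingleton (fun e S => e ∈ S) (fun e he => ?_)
      (fun S hS e₁ he₁ e₂ he₂ => ?_)
    · obtain ⟨S, hS, heS, -⟩ := hfund e (mem_compl.1 he)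
      exact ⟨S, by simpa using hS, heS⟩
    · simp only [Set.mem_ofPred_eq, mem_compl] at he₁ he₂
      obtain ⟨S₁, hS₁, he₁S₁, hS₁T⟩ := hfund e₁ he₁.1
      have : S₁ = S := hcyc e₁ ⟨hS₁, he₁S₁⟩ ⟨by simpa using hS, he₁.2⟩
      subst this
      exact (mem_insert.1 (hS₁T he₂.2)).resolve_right he₂.1 |>.symm
  rw [Set.ncard_eq_toFinset_card']
  have := card_compl_add_card T
  omega

theorem ncard_setOf_isSimpleCycleOn_le [Fintype E] [DecidableEq E] {ι : Type}
    (hcyc : ∀ e, {S | G.IsSimpleCycleOn S ∧ e ∈ S}.Subsingleton) (g : ι → E) (s : Finset ι)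
    (h : ∀ S, G.IsSimpleCycleOn S → ∃ i ∈ s, g i ∈ S) :
    {S : Finset E | G.IsSimpleCycleOn S}.ncard ≤ s.card := by
  classical
  rw [Set.ncard_eq_toFinset_card']
  refine card_le_card_of_forall_subsingleton (fun S i => g i ∈ S)
    (fun S hS => h S (by simpa using hS))
    (fun i _ S₁ hS₁ S₂ hS₂ => hcyc (g i) ⟨?_, hS₁.2⟩ ⟨?_, hS₂.2⟩)
  · simpa using hS₁.1
  · simpa using hS₂.1

end Multigraph

theorem Nat.card_eq_card_add_card_of_isCompl_range {α β γ : Type} [Finite γ] {f : α → γ}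
    {g : β → γ} (hf : f.Injective) (hg : g.Injective) (h : IsCompl (Set.range f) (Set.range g)) :
    Nat.card γ = Nat.card α + Nat.card β := by
  rw [← Set.ncard_add_ncard_compl (Set.range f), h.compl_eq, Set.ncard_range_of_injective hf,
    Set.ncard_range_of_injective hg]

namespace Multidigraph

theorem sum_indeg {V E : Type} [Fintype E] [DecidableEq V] (D : Multidigraph V E)
    (U : Finset V) : ∑ u ∈ U, D.indeg u = #{e | D.tgt e ∈ U} := by
  rw [card_eq_sum_card_fiberwise (f := D.tgt) (t := U) (fun e he => by simpa using he)]
  refine sum_congr rfl fun u hu => ?_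
  rw [indeg, filter_filter]
  exact congrArg card (filter_congr fun e _ => (and_iff_right_of_imp fun h => h ▸ hu).symm)

theorem sum_outdeg {V E : Type} [Fintype E] [DecidableEq V] (D : Multidigraph V E)
    (U : Finset V) : ∑ u ∈ U, D.outdeg u = #{e | D.src e ∈ U} := by
  rw [card_eq_sum_card_fiberwise (f := D.src) (t := U) (fun e he => by simpa using he)]
  refine sum_congr rfl fun u hu => ?_
  rw [outdeg, filter_filter]
  exact congrArg card (filter_congr fun e _ => (and_iff_right_of_imp fun h => h ▸ hu).symm)

variable {V E : Type} {D : Multidigraph V E}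

namespace DiWalk

def toWalk {u v : V} : D.DiWalk u v → D.toMultigraph.Walk u v
  | .nil v => .nil v
  | .cons e hs ht p => .cons e (by rw [← hs, ← ht]; rfl) p.toWalk

@[simp]
theorem toWalk_edges {u v : V} (p : D.DiWalk u v) : p.toWalk.edges = p.edges := by
  induction p with
  | nil => rfl
  | cons e _ _ p ih => exact congrArg (e :: ·) ih

@[simp]
theorem toWalk_verts {u v : V} (p : D.DiWalk u v) : p.toWalk.verts = p.verts := by
  induction p with
  | nil => rfl
  | @cons u _ _ _ _ _ p ih => exact congrArg (u :: ·) ih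

theorem cons_map_tgt_perm {u v : V} (p : D.DiWalk u v) :
    (u :: p.edges.map D.tgt).Perm (p.edges.map D.src ++ [v]) := by
  induction p with
  | nil => exact .refl _
  | cons e hs ht p ih =>
    subst hs ht
    exact ih.cons _

theorem map_tgt_perm_map_src {w : V} (p : D.DiWalk w w) :
    (p.edges.map D.tgt).Perm (p.edges.map D.src) :=
  (p.cons_map_tgt_perm.trans (List.perm_append_singleton _ _)).cons_inv

theorem exists_transition_or_tgt_eq (P : E → Prop) {u v : V} (p : D.DiWalk u v)
    (h : ∃ f ∈ p.edges, P f) :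
    (∃ f ∈ p.edges, ∃ g ∈ p.edges, P f ∧ ¬ P g ∧ D.tgt f = D.src g) ∨
      ∃ f ∈ p.edges, P f ∧ D.tgt f = v := by
  induction p with
  | nil => simp [edges] at h
  | cons e hs ht p ih =>
    by_cases hp : ∃ f ∈ p.edges, P f
    · rcases ih hp with ⟨f, hf, g, hg, hPf, hPg, hfg⟩ | ⟨f, hf, hPf, hfv⟩
      · exact .inl ⟨f, .tail _ hf, g, .tail _ hg, hPf, hPg, hfg⟩
      · exact .inr ⟨f, .tail _ hf, hPf, hfv⟩
    · push Not at hp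
      have hPe : P e := by
        obtain ⟨f, hf, hPf⟩ := h
        rcases List.mem_cons.1 hf with rfl | hf
        exacts [hPf, absurd hPf (hp f hf)]
      cases p with
      | nil => exact .inr ⟨e, List.mem_cons_self, hPe, ht⟩
      | cons g hg _ _ =>
        exact .inl ⟨e, List.mem_cons_self, g, .tail _ List.mem_cons_self, hPe,
          hp g List.mem_cons_self, ht.trans hg.symm⟩

theorem exists_transition_of_tgt_eq (P : E → Prop) {u v : V} (p : D.DiWalk u v) {f₀ : E}
    (hf₀ : P f₀) (hf₀u : D.tgt f₀ = u) (h : ∃ g ∈ p.edges, ¬ P g) :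
    ∃ f ∈ f₀ :: p.edges, ∃ g ∈ p.edges, P f ∧ ¬ P g ∧ D.tgt f = D.src g := by
  induction p generalizing f₀ with
  | nil => simp [edges] at h
  | cons e hs ht p ih =>
    by_cases hPe : P e
    · have hp : ∃ g ∈ p.edges, ¬ P g := by
        obtain ⟨g, hg, hPg⟩ := h
        rcases List.mem_cons.1 hg with rfl | hg
        exacts [absurd hPe hPg, ⟨g, hg, hPg⟩]
      obtain ⟨f, hf, g, hg, hPf, hPg, hfg⟩ := ih hPe ht hp
      exact ⟨f, .tail _ hf, g, .tail _ hg, hPf, hPg, hfg⟩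
    · exact ⟨f₀, List.mem_cons_self, e, List.mem_cons_self, hf₀, hPe, hf₀u.trans hs.symm⟩

end DiWalk

theorem IsDiCycleOn.toMultigraph [DecidableEq E] {S : Finset E} (h : D.IsDiCycleOn S) :
    D.toMultigraph.IsSimpleCycleOn S := by
  obtain ⟨v, p, hne, hnd, hvnd, hS⟩ := h
  exact ⟨v, p.toWalk, by simpa using hne, by simpa using hnd, by simpa using hvnd,
    by simpa using hS⟩

theorem IsDiCycleOn.exists_tgt_eq_src [DecidableEq E] {S : Finset E} (h : D.IsDiCycleOn S)
    {f : E} (hf : f ∈ S) : ∃ g ∈ S, D.tgt g = D.src f := by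
  obtain ⟨v, p, -, -, -, rfl⟩ := h
  obtain ⟨g, hg, hgf⟩ := List.mem_map.1
    (p.map_tgt_perm_map_src.mem_iff.2 (List.mem_map_of_mem (List.mem_toFinset.1 hf)))
  exact ⟨g, List.mem_toFinset.2 hg, hgf⟩

theorem IsDiCycleOn.exists_src_eq_tgt [DecidableEq E] {S : Finset E} (h : D.IsDiCycleOn S)
    {f : E} (hf : f ∈ S) : ∃ g ∈ S, D.src g = D.tgt f := by
  obtain ⟨v, p, -, -, -, rfl⟩ := h
  obtain ⟨g, hg, hgf⟩ := List.mem_map.1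
    (p.map_tgt_perm_map_src.mem_iff.1 (List.mem_map_of_mem (List.mem_toFinset.1 hf)))
  exact ⟨g, List.mem_toFinset.2 hg, hgf⟩

theorem IsDiCycleOn.exists_transition [DecidableEq E] {S : Finset E} (h : D.IsDiCycleOn S)
    (P : E → Prop) (h₁ : ∃ f ∈ S, P f) (h₂ : ∃ g ∈ S, ¬ P g) :
    ∃ f ∈ S, ∃ g ∈ S, P f ∧ ¬ P g ∧ D.tgt f = D.src g := by
  obtain ⟨v, p, -, -, -, rfl⟩ := h
  simp only [List.mem_toFinset] at h₁ h₂ ⊢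
  rcases p.exists_transition_or_tgt_eq P h₁ with h | ⟨f₀, hf₀, hPf₀, hf₀v⟩
  · exact h
  · obtain ⟨f, hf, g, hg, hfg⟩ := p.exists_transition_of_tgt_eq P hPf₀ hf₀v h₂
    exact ⟨f, (List.mem_cons.1 hf).elim (· ▸ hf₀) id, g, hg, hfg⟩

theorem IsOrientedCactus.exists_tgt_eq_src [DecidableEq E] (hD : D.IsOrientedCactus) (f : E) :
    ∃ g, D.tgt g = D.src f := by
  obtain ⟨S, ⟨hS, hfS⟩, -⟩ := hD.1.2 f
  obtain ⟨g, -, hg⟩ := (hD.2 S hS).exists_tgt_eq_src hfS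
  exact ⟨g, hg⟩

theorem IsOrientedCactus.exists_src_eq_tgt [DecidableEq E] (hD : D.IsOrientedCactus) (f : E) :
    ∃ g, D.src g = D.tgt f := by
  obtain ⟨S, ⟨hS, hfS⟩, -⟩ := hD.1.2 f
  obtain ⟨g, -, hg⟩ := (hD.2 S hS).exists_src_eq_tgt hfS
  exact ⟨g, hg⟩

end Multidigraph

namespace Multidigraph.Embedding

variable {Q F V E V' E' : Type} {D : Multidigraph Q F} {t : Multidigraph V E}
  {t' : Multidigraph V' E'} (φ : t.Embedding D) (φ' : t'.Embedding D)

theorem exists_diWalk_lift {x y : Q} (p : D.DiWalk x y) (hp : ∀ f ∈ p.edges, f ∈ Set.range φ.emap)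
    {a : V} (ha : φ.vmap a = x) :
    ∃ b, φ.vmap b = y ∧ ∃ q : t.DiWalk a b,
      p.edges = q.edges.map φ.emap ∧ p.verts = q.verts.map φ.vmap := by
  induction p generalizing a with
  | nil => exact ⟨a, ha, .nil a, rfl, by simp [DiWalk.verts, ha]⟩
  | cons f hs ht p ih =>
    obtain ⟨e, rfl⟩ := hp f List.mem_cons_self
    have hsrc : t.src e = a := φ.vmap_inj (by rw [← φ.src_map, hs, ha])
    obtain ⟨b, hb, q, hqe, hqv⟩ :=
      ih (fun f hf => hp f (List.mem_cons_of_mem _ hf)) (by rw [← φ.tgt_map, ht])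
    exact ⟨b, hb, .cons e hsrc rfl q, by simp [DiWalk.edges, hqe],
      by simp [DiWalk.verts, hqv, ha]⟩

theorem exists_isDiCycleOn [DecidableEq F] [DecidableEq E] {S : Finset F} (hS : D.IsDiCycleOn S)
    (hSφ : ∀ f ∈ S, f ∈ Set.range φ.emap) : ∃ S', t.IsDiCycleOn S' := by
  obtain ⟨w, p, hne, hnd, hvnd, rfl⟩ := hS
  have hp : ∀ f ∈ p.edges, f ∈ Set.range φ.emap := fun f hf => hSφ f (List.mem_toFinset.2 hf)
  cases p with
  | nil => exact absurd rfl hne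
  | cons f hs ht p' =>
    obtain ⟨e, rfl⟩ := hp f List.mem_cons_self
    obtain ⟨b, hb, q, hqe, hqv⟩ :=
      φ.exists_diWalk_lift (.cons (φ.emap e) hs ht p') hp (a := t.src e) (by rw [← hs, φ.src_map])
    obtain rfl : b = t.src e := φ.vmap_inj (by rw [hb, ← hs, φ.src_map])
    refine ⟨q.edges.toFinset, t.src e, q, ?_, ?_, ?_, rfl⟩
    · rintro hq
      exact hne (by rw [hqe, hq, List.map_nil])
    · rw [hqe] at hnd
      exact hnd.of_map _
    · rw [hqv, ← List.map_dropLast] at hvnd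
      exact hvnd.of_map _

theorem exists_mem_notMem_range [DecidableEq F] [DecidableEq E]
    (ht : ∀ S, ¬ t.toMultigraph.IsSimpleCycleOn S) {S : Finset F} (hS : D.IsDiCycleOn S) :
    ∃ f ∈ S, f ∉ Set.range φ.emap := by
  by_contra! h
  obtain ⟨S', hS'⟩ := φ.exists_isDiCycleOn hS h
  exact ht S' hS'.toMultigraph

theorem exists_tgt_eq_of_src_eq [DecidableEq F] (hD : D.IsOrientedCactus) {u : V}
    (hu : ∀ f, φ.vmap u ∈ D.toMultigraph.ends f → f ∈ Set.range φ.emap) {e : E}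
    (he : t.src e = u) : ∃ e', t.tgt e' = u := by
  obtain ⟨g, hg⟩ := hD.exists_tgt_eq_src (φ.emap e)
  rw [φ.src_map, he] at hg
  obtain ⟨e', rfl⟩ := hu g (hg ▸ Sym2.mem_mk_right _ _)
  exact ⟨e', φ.vmap_inj (by rw [← φ.tgt_map, hg])⟩

theorem exists_src_eq_of_tgt_eq [DecidableEq F] (hD : D.IsOrientedCactus) {u : V}
    (hu : ∀ f, φ.vmap u ∈ D.toMultigraph.ends f → f ∈ Set.range φ.emap) {e : E}
    (he : t.tgt e = u) : ∃ e', t.src e' = u := by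
  obtain ⟨g, hg⟩ := hD.exists_src_eq_tgt (φ.emap e)
  rw [φ.tgt_map, he] at hg
  obtain ⟨e', rfl⟩ := hu g (hg ▸ Sym2.mem_mk_left _ _)
  exact ⟨e', φ.vmap_inj (by rw [← φ.src_map, hg])⟩

theorem three_le_indeg_add_outdeg [DecidableEq F] [Fintype V] [Fintype E] [DecidableEq V]
    (hD : D.IsOrientedCactus) (ht : t.toMultigraph.Connected) (hV : 1 < Fintype.card V) {u : V}
    (hdeg : ¬ (t.indeg u = 1 ∧ t.outdeg u = 1))
    (hu : ∀ f, φ.vmap u ∈ D.toMultigraph.ends f → f ∈ Set.range φ.emap) :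
    3 ≤ t.indeg u + t.outdeg u := by
  obtain ⟨e, he⟩ := ht.exists_mem_ends hV u
  have ⟨⟨ein, hein⟩, ⟨eout, heout⟩⟩ : (∃ e, t.tgt e = u) ∧ ∃ e, t.src e = u := by
    rcases Sym2.mem_iff.1 he with he | he
    · exact ⟨φ.exists_tgt_eq_of_src_eq hD hu he.symm, e, he.symm⟩
    · exact ⟨⟨e, he.symm⟩, φ.exists_src_eq_of_tgt_eq hD hu he.symm⟩
  have hin : 1 ≤ t.indeg u := card_pos.2 ⟨ein, by simpa using hein⟩
  have hout : 1 ≤ t.outdeg u := card_pos.2 ⟨eout, by simpa using heout⟩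
  omega

theorem natCard_eq_natCard_add_card [Finite Q]
    (hcover : ∀ x, x ∈ Set.range φ.vmap ∨ x ∈ Set.range φ'.vmap) (U : Finset V)
    (hU : ∀ u, u ∈ U ↔ φ.vmap u ∉ Set.range φ'.vmap) :
    Nat.card Q = Nat.card V' + #U := by
  have hcompl : (Set.range φ'.vmap)ᶜ = φ.vmap '' U := by
    ext x
    constructor
    · intro hx
      obtain ⟨u, rfl⟩ := (hcover x).resolve_right hx
      exact ⟨u, (hU u).2 hx, rfl⟩
    · rintro ⟨u, hu, rfl⟩
      exact (hU u).1 hu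
  rw [← Set.ncard_add_ncard_compl (Set.range φ'.vmap), Set.ncard_range_of_injective φ'.vmap_inj,
    hcompl, Set.ncard_image_of_injective _ φ.vmap_inj, Set.ncard_coe_finset]

theorem mem_range_emap_of_notMem_range_vmap
    (hcompl : IsCompl (Set.range φ.emap) (Set.range φ'.emap)) {u : V}
    (hu : φ.vmap u ∉ Set.range φ'.vmap) {f : F} (hf : φ.vmap u ∈ D.toMultigraph.ends f) :
    f ∈ Set.range φ.emap := by
  by_contra h
  obtain ⟨e', rfl⟩ : f ∈ Set.range φ'.emap := by rwa [← hcompl.compl_eq]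
  rcases Sym2.mem_iff.1 hf with hf | hf
  · exact hu ⟨t'.src e', by rw [hf, φ'.src_map]⟩
  · exact hu ⟨t'.tgt e', by rw [hf, φ'.tgt_map]⟩

variable [DecidableEq F] [DecidableEq E] [DecidableEq E']

theorem exists_emap_mem_of_isSimpleCycleOn (hD : D.IsOrientedCactus)
    (hcompl : IsCompl (Set.range φ.emap) (Set.range φ'.emap))
    (ht : ∀ S, ¬ t.toMultigraph.IsSimpleCycleOn S)
    (ht' : ∀ S, ¬ t'.toMultigraph.IsSimpleCycleOn S)
    {S : Finset F} (hS : D.toMultigraph.IsSimpleCycleOn S) :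
    (∃ e, φ.emap e ∈ S ∧ φ.vmap (t.tgt e) ∈ Set.range φ'.vmap) ∧
      ∃ e, φ.emap e ∈ S ∧ φ.vmap (t.src e) ∈ Set.range φ'.vmap := by
  have hS' := hD.2 S hS
  have hmem : ∀ f, f ∉ Set.range φ.emap → f ∈ Set.range φ'.emap := fun f hf => by
    rwa [← hcompl.compl_eq]
  obtain ⟨f₁, hf₁S, hf₁⟩ := φ.exists_mem_notMem_range ht hS'
  obtain ⟨f₂, hf₂S, hf₂⟩ := φ'.exists_mem_notMem_range ht' hS'
  have hf₂' : f₂ ∈ Set.range φ.emap := not_not.1 (mt (hmem f₂) hf₂)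
  constructor
  · obtain ⟨-, hf, g, -, ⟨e, rfl⟩, hg, hfg⟩ :=
      hS'.exists_transition (· ∈ Set.range φ.emap) ⟨f₂, hf₂S, hf₂'⟩ ⟨f₁, hf₁S, hf₁⟩
    obtain ⟨e', rfl⟩ := hmem g hg
    exact ⟨e, hf, t'.src e', by rw [← φ'.src_map, ← hfg, φ.tgt_map]⟩
  · obtain ⟨g, -, f, hf, hg, hf', hgf⟩ :=
      hS'.exists_transition (· ∉ Set.range φ.emap) ⟨f₁, hf₁S, hf₁⟩ ⟨f₂, hf₂S, not_not.2 hf₂'⟩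
    obtain ⟨e, rfl⟩ := not_not.1 hf'
    obtain ⟨e', rfl⟩ := hmem g hg
    exact ⟨e, hf, t'.tgt e', by rw [← φ'.tgt_map, hgf, φ.src_map]⟩

end Multidigraph.Embedding

namespace Multidigraph

theorem IsOrientedCactus.range_vmap_subset {Q F V E V' E' : Type} {D : Multidigraph Q F}
    {t : Multidigraph V E} {t' : Multidigraph V' E'} [Fintype Q] [Fintype F] [DecidableEq F]
    [Fintype V] [Fintype E] [DecidableEq V] [DecidableEq E] [Fintype V'] [Fintype E']
    [DecidableEq E'] (hD : D.IsOrientedCactus) (φ : t.Embedding D) (φ' : t'.Embedding D)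
    (hcompl : IsCompl (Set.range φ.emap) (Set.range φ'.emap))
    (hcover : ∀ x, x ∈ Set.range φ.vmap ∨ x ∈ Set.range φ'.vmap)
    (ht : t.toMultigraph.IsTree) (hV : 1 < Fintype.card V)
    (hdeg : ∀ v, ¬ (t.indeg v = 1 ∧ t.outdeg v = 1)) (ht' : t'.toMultigraph.IsTree) :
    Set.range φ.vmap ⊆ Set.range φ'.vmap := by
  classical
  set U := univ.filter fun u => φ.vmap u ∉ Set.range φ'.vmap with hU
  have h3 : 3 * #U ≤ #{e | t.tgt e ∈ U} + #{e | t.src e ∈ U} := by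
    rw [← t.sum_indeg, ← t.sum_outdeg, ← sum_add_distrib, mul_comm, ← smul_eq_mul]
    exact card_nsmul_le_sum _ _ _ fun u hu =>
      φ.three_le_indeg_add_outdeg hD ht.1 hV (hdeg u)
        fun _ => φ.mem_range_emap_of_notMem_range_vmap φ' hcompl (mem_filter.1 hu).2
  have hcyc : ∀ f, {S | D.toMultigraph.IsSimpleCycleOn S ∧ f ∈ S}.Subsingleton :=
    fun f _ hS _ hS' => (hD.1.2 f).unique hS hS'
  have hC₁ := Multigraph.ncard_setOf_isSimpleCycleOn_le hcyc φ.emap {e | t.tgt e ∉ U}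
    fun S hS =>
      have ⟨e, heS, he⟩ := (φ.exists_emap_mem_of_isSimpleCycleOn φ' hD hcompl ht.2 ht'.2 hS).1
      ⟨e, by simpa [hU] using he, heS⟩
  have hC₂ := Multigraph.ncard_setOf_isSimpleCycleOn_le hcyc φ.emap {e | t.src e ∉ U}
    fun S hS =>
      have ⟨e, heS, he⟩ := (φ.exists_emap_mem_of_isSimpleCycleOn φ' hD hcompl ht.2 ht'.2 hS).2
      ⟨e, by simpa [hU] using he, heS⟩
  have : Nonempty V := Fintype.card_pos_iff.1 (by omega)
  have : Nonempty Q := ⟨φ.vmap (Classical.arbitrary V)⟩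
  have hcount := Multigraph.card_add_one_le_card_add_ncard hD.1.1 hcyc
  have hF := Nat.card_eq_card_add_card_of_isCompl_range φ.emap_inj φ'.emap_inj hcompl
  have hQ := φ.natCard_eq_natCard_add_card φ' hcover U fun u => by simp [hU]
  have hV' := ht'.1.card_le_card_add_one
  have htgt := card_filter_add_card_filter_not (s := univ) fun e => t.tgt e ∈ U
  have hsrc := card_filter_add_card_filter_not (s := univ) fun e => t.src e ∈ U
  simp only [Nat.card_eq_fintype_card, card_univ] at hF hQ htgt hsrc
  have hU0 : #U = 0 := by omega
  rintro _ ⟨u, rfl⟩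
  by_contra hu
  have hu : u ∈ U := by simpa [hU] using hu
  simp [card_eq_zero.1 hU0] at hu

variable {V E V' E' : Type} [DecidableEq V'] (t : Multidigraph V E) (t' : Multidigraph V' E')
  (ρ : V) (ρ' : V') (σ : Setoid (V ⊕ {x : V' // x ≠ ρ'}))

def inlWedgeQuotEmbedding (hsolid : ∀ a b : V, σ.r (Sum.inl a) (Sum.inl b) → a = b) :
    t.Embedding ((t.wedge t' ρ ρ').quot σ) where
  vmap v := Quotient.mk σ (Sum.inl v)
  emap := Sum.inl
  vmap_inj _ _ h := hsolid _ _ (Quotient.exact h)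
  emap_inj := Sum.inl_injective
  src_map _ := rfl
  tgt_map _ := rfl

def inrWedgeQuotEmbedding (hsolid : ∀ a b : V', σ.r (wedgeJ ρ ρ' a) (wedgeJ ρ ρ' b) → a = b) :
    t'.Embedding ((t.wedge t' ρ ρ').quot σ) where
  vmap v' := Quotient.mk σ (wedgeJ ρ ρ' v')
  emap := Sum.inr
  vmap_inj _ _ h := hsolid _ _ (Quotient.exact h)
  emap_inj := Sum.inr_injective
  src_map _ := rfl
  tgt_map _ := rfl

end Multidigraph

theorem stmt_10_general {V E V' E' : Type} [Fintype V] [Fintype V'] [Fintype E] [Fintype E']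
    [DecidableEq V] [DecidableEq V'] [DecidableEq E] [DecidableEq E']
    (t : Multidigraph V E) (t' : Multidigraph V' E') (ρ : V) (ρ' : V')
    (ht : t.toMultigraph.IsTree) (ht' : t'.toMultigraph.IsTree)
    (hV : 1 < Fintype.card V) (hV' : 1 < Fintype.card V')
    (hdeg : ∀ v : V, ¬ (t.indeg v = 1 ∧ t.outdeg v = 1))
    (hdeg' : ∀ v' : V', ¬ (t'.indeg v' = 1 ∧ t'.outdeg v' = 1))
    (σ : Setoid (V ⊕ {x : V' // x ≠ ρ'}))
    (hsolid₁ : ∀ a b : V, σ.r (Sum.inl a) (Sum.inl b) → a = b)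
    (hsolid₂ : ∀ a b : V', σ.r (wedgeJ ρ ρ' a) (wedgeJ ρ ρ' b) → a = b)
    (hcactus : ((t.wedge t' ρ ρ').quot σ).IsOrientedCactus) :
    (∀ v : V, ∃! v' : V', σ.r (Sum.inl v) (wedgeJ ρ ρ' v')) ∧
    (∀ v' : V', ∃! v : V, σ.r (Sum.inl v) (wedgeJ ρ ρ' v')) := by
  classical
  set φ := t.inlWedgeQuotEmbedding t' ρ ρ' σ hsolid₁
  set φ' := t.inrWedgeQuotEmbedding t' ρ ρ' σ hsolid₂
  have hcover : ∀ x, x ∈ Set.range φ.vmap ∨ x ∈ Set.range φ'.vmap := by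
    rintro ⟨v | ⟨v', hv'⟩⟩
    · exact .inl ⟨v, rfl⟩
    · exact .inr ⟨v', congrArg (Quot.mk _) (dif_neg hv')⟩
  have h₁ := hcactus.range_vmap_subset φ φ' Set.isCompl_range_inl_range_inr hcover ht hV hdeg ht'
  have h₂ := hcactus.range_vmap_subset φ' φ Set.isCompl_range_inl_range_inr.symm
    (fun x => (hcover x).symm) ht' hV' hdeg' ht
  refine ⟨fun v => ?_, fun v' => ?_⟩
  · obtain ⟨v', hv'⟩ := h₁ ⟨v, rfl⟩
    exact ⟨v', Quotient.exact hv'.symm,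
      fun w hw => φ'.vmap_inj ((Quotient.sound hw).symm.trans hv'.symm)⟩
  · obtain ⟨v, hv⟩ := h₂ ⟨v', rfl⟩
    exact ⟨v, Quotient.exact hv, fun w hw => φ.vmap_inj ((Quotient.sound hw).trans hv.symm)⟩

/-- Let `t, t'` be finite directed trees with roots `ρ, ρ'` of degree
one, each with at least two vertices, in which no vertex has indegree and outdegree both
equal to one, and let `T` be the multidigraph obtained by identifying `ρ` with `ρ'`.
If `π` is a solid partition of the vertices of `T` whose quotient `T^π` is an oriented
cactus, then `π` induces a pair partition of the two vertex sets: every vertex of `t`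
lies in the same block as exactly one vertex of `t'` and vice versa (with `ρ ↔ ρ'`). -/
theorem stmt_10 {V E V' E' : Type} [Fintype V] [Fintype V'] [Fintype E] [Fintype E']
    [DecidableEq V] [DecidableEq V'] [DecidableEq E] [DecidableEq E']
    (t : Multidigraph V E) (t' : Multidigraph V' E') (ρ : V) (ρ' : V')
    (ht : t.toMultigraph.IsTree) (ht' : t'.toMultigraph.IsTree)
    (hV : 1 < Fintype.card V) (hV' : 1 < Fintype.card V')
    (hρ : t.toMultigraph.degree ρ = 1) (hρ' : t'.toMultigraph.degree ρ' = 1)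
    (hdeg : ∀ v : V, ¬ (t.indeg v = 1 ∧ t.outdeg v = 1))
    (hdeg' : ∀ v' : V', ¬ (t'.indeg v' = 1 ∧ t'.outdeg v' = 1))
    (σ : Setoid (V ⊕ {x : V' // x ≠ ρ'}))
    (hsolid₁ : ∀ a b : V, σ.r (Sum.inl a) (Sum.inl b) → a = b)
    (hsolid₂ : ∀ a b : V', σ.r (wedgeJ ρ ρ' a) (wedgeJ ρ ρ' b) → a = b)
    (hcactus : ((t.wedge t' ρ ρ').quot σ).IsOrientedCactus) :
    (∀ v : V, ∃! v' : V', σ.r (Sum.inl v) (wedgeJ ρ ρ' v')) ∧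
    (∀ v' : V', ∃! v : V, σ.r (Sum.inl v) (wedgeJ ρ ρ' v')) :=
  stmt_10_general t t' ρ ρ' ht ht' hV hV' hdeg hdeg' σ hsolid₁ hsolid₂ hcactus
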